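/- arXiv:2512.01905 — 2 statements merged into one kernel-verified Lean document; each statement's English description precedes it below -/
import Mathlib

section
/- Let G = G₁ ∪ G₂ with V(G₁) ∩ V(G₂) = {u, v} and E(G₁) ∩ E(G₂) = ∅, and suppose τ(G) < 1. If S is a tough set of minimum size with S ∩ {u, v} = ∅, then S ⊆ V(G₁) − {u, v} or S ⊆ V(G₂) − {u, v}. -/
open SimpleGraph

noncomputable def numComp {V : Type*} (G : SimpleGraph V) (S : Set V) : ℕ :=
  Nat.card (SimpleGraph.induce Sᶜ G).ConnectedComponent

def IsCutset {V : Type*} (G : SimpleGraph V) (S : Set V) : Prop := 1 < numComp G S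

noncomputable def toughness {V : Type*} (G : SimpleGraph V) : ℝ :=
  sInf {r : ℝ | ∃ S : Set V, IsCutset G S ∧ r = (S.ncard : ℝ) / (numComp G S : ℝ)}

def IsToughSet {V : Type*} (G : SimpleGraph V) (S : Set V) : Prop :=
  IsCutset G S ∧ (S.ncard : ℝ) = toughness G * (numComp G S : ℝ)

def MinTough {V : Type*} (G : SimpleGraph V) (t : ℝ) : Prop :=
  toughness G = t ∧ ∀ e ∈ G.edgeSet, toughness (G.deleteEdges {e}) < t

def IsCutVertex {V : Type*} (G : SimpleGraph V) (x : V) : Prop := IsCutset G {x}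

/-! Put `B₁ = A₁ \ A₂` and `B₂ = A₂ \ A₁`: there are no edges between `B₁` and `B₂`. If `S` met
both, let `Sᵢ = S ∩ Bᵢ`. A component of `G - S` not containing `u` or `v` lies inside one `Bᵢ`, so all
its neighbours in `S` lie in `Sᵢ` and it is still a component of `G - Sᵢ`, different from the one
containing `u` (for `i = 1`) or `v` (for `i = 2`). Hence `c(G - S) ≤ c(G - S₁) + c(G - S₂)`. Now
`τ c(G - S) = |S| = |S₁| + |S₂|`, while `τ c(G - Sᵢ)` is at most `|Sᵢ|` if `Sᵢ` is a cutset and at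
most `τ < 1 ≤ |Sᵢ|` otherwise; so both `Sᵢ` are cutsets with `|Sᵢ| = τ c(G - Sᵢ)`, and `S₁` is a
tough set smaller than `S`. -/

theorem Set.injOn_insert_of_forall_eq {α β : Type*} {f : α → β} {P : Set α} (c : α)
    (hP : ∀ x ∈ P, ∀ y, f x = f y → x = y) : Set.InjOn f (insert c P) := by
  rintro x (rfl | hx) y (rfl | hy) h
  exacts [rfl, (hP y hy _ h.symm).symm, hP x hx _ h, hP x hx y h]

theorem Nat.card_le_card_add_card_of_cover {α β₁ β₂ : Type*} [Finite β₁] [Finite β₂]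
    (f₁ : α → β₁) (f₂ : α → β₂) (P₁ P₂ : Set α) (a b : α)
    (h₁ : ∀ x ∈ P₁, ∀ y, f₁ x = f₁ y → x = y) (h₂ : ∀ x ∈ P₂, ∀ y, f₂ x = f₂ y → x = y)
    (hcover : ∀ x, x ∈ P₁ ∨ x ∈ P₂ ∨ x = a ∨ x = b) :
    Nat.card α ≤ Nat.card β₁ + Nat.card β₂ := by
  classical
  let F : α → β₁ ⊕ β₂ := fun x => if x ∈ insert a P₁ then .inl (f₁ x) else .inr (f₂ x)
  have hF : F.Injective := by
    intro x y hxy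
    by_cases hx : x ∈ insert a P₁ <;> by_cases hy : y ∈ insert a P₁ <;>
      simp only [F, hx, hy, if_true, if_false, Sum.inl.injEq, Sum.inr.injEq, reduceCtorEq] at hxy
    · exact Set.injOn_insert_of_forall_eq a h₁ hx hy hxy
    · have hP₂ : ∀ z ∉ insert a P₁, z ∈ insert b P₂ := fun z hz => by
        have := hcover z; simp only [Set.mem_insert_iff] at hz ⊢; tauto
      exact Set.injOn_insert_of_forall_eq b h₂ (hP₂ x hx) (hP₂ y hy) hxy
  simpa only [Nat.card_sum] using Nat.card_le_card_of_injective F hF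

namespace SimpleGraph

variable {V : Type*} {G : SimpleGraph V} {S : Set V}

theorem ConnectedComponent.eq_of_map_induceHomOfLE_eq {T : Set V} (hTS : T ⊆ S)
    {C D : (G.induce Sᶜ).ConnectedComponent} (hC : ∀ a ∈ C.supp, ∀ b ∈ S, G.Adj a b → b ∈ T)
    (h : C.map (G.induceHomOfLE (Set.compl_subset_compl.mpr hTS)).toHom =
      D.map (G.induceHomOfLE (Set.compl_subset_compl.mpr hTS)).toHom) :
    C = D := by
  induction C using ConnectedComponent.ind with | h c => ?_
  induction D using ConnectedComponent.ind with | h d => ?_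
  suffices closed : ∀ y : ↥Tᶜ, (G.induce Tᶜ).Reachable
      ((G.induceHomOfLE (Set.compl_subset_compl.mpr hTS)).toHom c) y →
      ∃ hy : y.1 ∈ Sᶜ, ⟨y.1, hy⟩ ∈ ((G.induce Sᶜ).connectedComponentMk c).supp from
    Eq.symm (closed _ (ConnectedComponent.exact h)).2
  intro y hy
  rw [reachable_iff_reflTransGen] at hy
  induction hy with
  | refl => exact ⟨c.2, rfl⟩
  | @tail a b _ hab ih =>
    obtain ⟨ha, haC⟩ := ih
    have hb : b.1 ∈ Sᶜ := fun hbS => b.2 (hC _ haC _ hbS hab)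
    exact ⟨hb, (ConnectedComponent.mem_supp_congr_adj _
      (show (G.induce Sᶜ).Adj ⟨_, ha⟩ ⟨_, hb⟩ from hab)).mp haC⟩

theorem ConnectedComponent.val_mem_of_adj_closed {B : Set V} {u v : V}
    (hB : ∀ a b, G.Adj a b → a ∈ B → b ≠ u → b ≠ v → b ∈ B)
    {C : (G.induce Sᶜ).ConnectedComponent} (huv : ∀ a ∈ C.supp, a.1 ≠ u ∧ a.1 ≠ v)
    {c a : ↥Sᶜ} (hc : c ∈ C.supp) (hcB : c.1 ∈ B) (ha : a ∈ C.supp) : a.1 ∈ B := by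
  have hca := (reachable_iff_reflTransGen c a).mp (ConnectedComponent.exact (hc.trans ha.symm))
  clear ha
  suffices a.1 ∈ B ∧ a ∈ C.supp from this.1
  induction hca with
  | refl => exact ⟨hcB, hc⟩
  | @tail x y _ hxy ih =>
    have hy : y ∈ C.supp := (ConnectedComponent.mem_supp_congr_adj _ hxy).mp ih.2
    exact ⟨hB x y hxy ih.1 (huv y hy).1 (huv y hy).2, hy⟩

end SimpleGraph

theorem numComp_le_add_of_separation {V : Type*} [Finite V] {G : SimpleGraph V}
    {S B₁ B₂ : Set V} {u v : V}
    (hcover : ∀ z, z ∈ B₁ ∨ z ∈ B₂ ∨ z = u ∨ z = v)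
    (hsep : ∀ a b, G.Adj a b → a ∈ B₁ → b ∉ B₂) (hu : u ∉ S) (hv : v ∉ S) :
    numComp G S ≤ numComp G (S ∩ B₁) + numComp G (S ∩ B₂) := by
  have closed₁ : ∀ a b, G.Adj a b → a ∈ B₁ → b ≠ u → b ≠ v → b ∈ B₁ := by
    intro a b hab ha hbu hbv
    rcases hcover b with h | h | h | h
    exacts [h, (hsep a b hab ha h).elim, (hbu h).elim, (hbv h).elim]
  have closed₂ : ∀ a b, G.Adj a b → a ∈ B₂ → b ≠ u → b ≠ v → b ∈ B₂ := by
    intro a b hab ha hbu hbv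
    rcases hcover b with h | h | h | h
    exacts [(hsep b a hab.symm h ha).elim, h, (hbu h).elim, (hbv h).elim]
  have nbrs : ∀ {B : Set V}, (∀ a b, G.Adj a b → a ∈ B → b ≠ u → b ≠ v → b ∈ B) →
      ∀ {C : (G.induce Sᶜ).ConnectedComponent}, (∀ a ∈ C.supp, a.1 ≠ u ∧ a.1 ≠ v) →
      ∀ c ∈ C.supp, c.1 ∈ B → ∀ a ∈ C.supp, ∀ b ∈ S, G.Adj a b → b ∈ S ∩ B :=
    fun hB _ huv c hc hcB a ha b hbS hab => ⟨hbS, hB a b hab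
      (ConnectedComponent.val_mem_of_adj_closed hB huv hc hcB ha)
      (ne_of_mem_of_not_mem hbS hu) (ne_of_mem_of_not_mem hbS hv)⟩
  refine Nat.card_le_card_add_card_of_cover _ _
    {C | ∀ a ∈ C.supp, ∀ b ∈ S, G.Adj a b → b ∈ S ∩ B₁}
    {C | ∀ a ∈ C.supp, ∀ b ∈ S, G.Adj a b → b ∈ S ∩ B₂}
    ((G.induce Sᶜ).connectedComponentMk ⟨u, hu⟩) ((G.induce Sᶜ).connectedComponentMk ⟨v, hv⟩)
    (fun C hC _ => ConnectedComponent.eq_of_map_induceHomOfLE_eq Set.inter_subset_left hC)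
    (fun C hC _ => ConnectedComponent.eq_of_map_induceHomOfLE_eq Set.inter_subset_left hC) ?_
  intro C
  by_cases hCu : C = (G.induce Sᶜ).connectedComponentMk ⟨u, hu⟩
  · tauto
  by_cases hCv : C = (G.induce Sᶜ).connectedComponentMk ⟨v, hv⟩
  · tauto
  have huv : ∀ a ∈ C.supp, a.1 ≠ u ∧ a.1 ≠ v := fun a ha =>
    ⟨fun h => hCu (ha ▸ congrArg _ (Subtype.ext h)), fun h => hCv (ha ▸ congrArg _ (Subtype.ext h))⟩
  obtain ⟨c, hc⟩ := C.exists_rep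
  rcases hcover c.1 with h | h | h | h
  · exact .inl (nbrs closed₁ huv c hc h)
  · exact .inr (.inl (nbrs closed₂ huv c hc h))
  · exact ((huv c hc).1 h).elim
  · exact ((huv c hc).2 h).elim

theorem toughness_nonneg {V : Type*} (G : SimpleGraph V) : 0 ≤ toughness G :=
  Real.sInf_nonneg (by rintro _ ⟨S, -, rfl⟩; positivity)

theorem toughness_mul_numComp_le {V : Type*} {G : SimpleGraph V} {T : Set V}
    (hT : IsCutset G T) : toughness G * numComp G T ≤ T.ncard := by
  have hpos : (0 : ℝ) < numComp G T := by exact_mod_cast zero_lt_one.trans hT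
  rw [← le_div_iff₀ hpos]
  exact csInf_le ⟨0, by rintro _ ⟨S, -, rfl⟩; positivity⟩ ⟨T, hT, rfl⟩

theorem exists_toughSet_ncard_lt {V : Type*} [Finite V] {G : SimpleGraph V}
    (ht : toughness G < 1) {S S₁ S₂ : Set V} (hS : IsToughSet G S) (hunion : S₁ ∪ S₂ = S)
    (hdisj : Disjoint S₁ S₂) (hne₁ : S₁.Nonempty) (hne₂ : S₂.Nonempty)
    (hnum : numComp G S ≤ numComp G S₁ + numComp G S₂) :
    ∃ T, IsToughSet G T ∧ T.ncard < S.ncard := by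
  subst hunion
  have hcard := Set.ncard_union_eq hdisj
  have hpos₂ := (Set.ncard_pos).mpr hne₂
  have hone₁ : (1 : ℝ) ≤ S₁.ncard := by exact_mod_cast (Set.ncard_pos).mpr hne₁
  have hone₂ : (1 : ℝ) ≤ S₂.ncard := by exact_mod_cast hpos₂
  have ht₀ := toughness_nonneg G
  have hsplit : toughness G * numComp G (S₁ ∪ S₂) ≤
      toughness G * numComp G S₁ + toughness G * numComp G S₂ := by
    rw [← mul_add]; gcongr; exact_mod_cast hnum
  have hnotCut : ∀ T, ¬ IsCutset G T → toughness G * numComp G T ≤ toughness G := fun T hT =>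
    mul_le_of_le_one_right ht₀ (by exact_mod_cast not_lt.mp hT)
  have hS' := hS.2
  rw [hcard, Nat.cast_add] at hS'
  by_cases hcut₁ : IsCutset G S₁ <;> by_cases hcut₂ : IsCutset G S₂
  · have := toughness_mul_numComp_le hcut₂
    refine ⟨S₁, ⟨hcut₁, le_antisymm ?_ (toughness_mul_numComp_le hcut₁)⟩, by omega⟩
    linarith
  · have := toughness_mul_numComp_le hcut₁
    have := hnotCut _ hcut₂
    linarith
  · have := toughness_mul_numComp_le hcut₂
    have := hnotCut _ hcut₁
    linarith
  · have := hnotCut _ hcut₁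
    have := hnotCut _ hcut₂
    linarith

theorem minToughSet_subset_of_two_cut_general {V : Type*} [Fintype V]
    (G G₁ G₂ : SimpleGraph V) (A₁ A₂ : Set V) (u v : V)
    (hG : G = G₁ ⊔ G₂)
    (hsupp₁ : G₁.support ⊆ A₁) (hsupp₂ : G₂.support ⊆ A₂)
    (hAint : A₁ ∩ A₂ = {u, v}) (hAuniv : A₁ ∪ A₂ = Set.univ)
    (htough : toughness G < 1)
    (S : Set V) (hS : IsToughSet G S)
    (hmin : ∀ S' : Set V, IsToughSet G S' → S.ncard ≤ S'.ncard)
    (hSuv : S ∩ {u, v} = ∅) :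
    S ⊆ A₁ \ {u, v} ∨ S ⊆ A₂ \ {u, v} := by
  have huS : u ∉ S := fun h => hSuv.subset ⟨h, .inl rfl⟩
  have hvS : v ∉ S := fun h => hSuv.subset ⟨h, .inr rfl⟩
  have hcover : ∀ z, z ∈ A₁ \ A₂ ∨ z ∈ A₂ \ A₁ ∨ z = u ∨ z = v := by
    intro z
    have hint := Set.ext_iff.mp hAint z
    have huniv := Set.ext_iff.mp hAuniv z
    simp only [Set.mem_sdiff, Set.mem_inter_iff, Set.mem_union, Set.mem_insert_iff,
      Set.mem_singleton_iff, Set.mem_univ, iff_true] at hint huniv ⊢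
    tauto
  have hsep : ∀ a b, G.Adj a b → a ∈ A₁ \ A₂ → b ∉ A₂ \ A₁ := by
    rintro a b hab ⟨-, ha₂⟩ ⟨-, hb₁⟩
    rw [hG, sup_adj] at hab
    rcases hab with h | h
    exacts [hb₁ (hsupp₁ ⟨a, h.symm⟩), ha₂ (hsupp₂ ⟨b, h⟩)]
  have hsplit : S ∩ (A₁ \ A₂) ∪ S ∩ (A₂ \ A₁) = S := by
    rw [← Set.inter_union_distrib_left, Set.inter_eq_left]
    intro z hz
    rcases hcover z with h | h | rfl | rfl
    exacts [.inl h, .inr h, (huS hz).elim, (hvS hz).elim]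
  by_contra hcon
  rw [not_or, Set.not_subset, Set.not_subset] at hcon
  obtain ⟨⟨x, hxS, hx⟩, ⟨y, hyS, hy⟩⟩ := hcon
  have hx₂ : x ∈ A₂ \ A₁ := by grind
  have hy₁ : y ∈ A₁ \ A₂ := by grind
  obtain ⟨T, hT, hlt⟩ := exists_toughSet_ncard_lt htough hS hsplit
    (disjoint_sdiff_sdiff.mono Set.inter_subset_right Set.inter_subset_right) ⟨y, hyS, hy₁⟩
    ⟨x, hxS, hx₂⟩ (numComp_le_add_of_separation hcover hsep huS hvS)
  exact (hmin T hT).not_gt hlt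

/-- If `G = G₁ ∪ G₂` with `V(G₁) ∩ V(G₂) = {u, v}`, disjoint edge sets, and `τ(G) < 1`,
then any minimum-size tough set `S` with `S ∩ {u, v} = ∅` is fully contained in
`V(G₁) \ {u, v}` or in `V(G₂) \ {u, v}`. -/
theorem minToughSet_subset_of_two_cut {V : Type*} [Fintype V]
    (G G₁ G₂ : SimpleGraph V) (A₁ A₂ : Set V) (u v : V) (huv : u ≠ v)
    (hG : G = G₁ ⊔ G₂) (hEdisj : Disjoint G₁.edgeSet G₂.edgeSet)
    (hsupp₁ : G₁.support ⊆ A₁) (hsupp₂ : G₂.support ⊆ A₂)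
    (hAint : A₁ ∩ A₂ = {u, v}) (hAuniv : A₁ ∪ A₂ = Set.univ)
    (hconn : G.Connected) (htough : toughness G < 1)
    (S : Set V) (hS : IsToughSet G S)
    (hmin : ∀ S' : Set V, IsToughSet G S' → S.ncard ≤ S'.ncard)
    (hSuv : S ∩ {u, v} = ∅) :
    S ⊆ A₁ \ {u, v} ∨ S ⊆ A₂ \ {u, v} :=
  minToughSet_subset_of_two_cut_general G G₁ G₂ A₁ A₂ u v hG hsupp₁ hsupp₂ hAint hAuniv htough S hS
    hmin hSuv
end

section
/- If a series-parallel graph G contains R₄ (the parallel join of four length-2 paths, with common terminals s₁, t₁) as a substructure of its sp-decomposition, then G is not minimally 1/2-tough. -/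
open SimpleGraph

inductive SPTree (V : Type*) where
  | edge (u v : V) : SPTree V
  | series (l r : SPTree V) : SPTree V
  | parallel (l r : SPTree V) : SPTree V

namespace SPTree

def src {V : Type*} : SPTree V → V
  | edge u _ => u
  | series l _ => l.src
  | parallel l _ => l.src

def tgt {V : Type*} : SPTree V → V
  | edge _ v => v
  | series _ r => r.tgt
  | parallel l _ => l.tgt

def verts {V : Type*} : SPTree V → Set V
  | edge u v => {u, v}
  | series l r => l.verts ∪ r.verts
  | parallel l r => l.verts ∪ r.verts

def edges {V : Type*} : SPTree V → Set (Sym2 V)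
  | edge u v => {s(u, v)}
  | series l r => l.edges ∪ r.edges
  | parallel l r => l.edges ∪ r.edges

def WF {V : Type*} : SPTree V → Prop
  | edge u v => u ≠ v
  | series l r => l.WF ∧ r.WF ∧ l.tgt = r.src ∧ l.verts ∩ r.verts = {l.tgt}
  | parallel l r => l.WF ∧ r.WF ∧ l.src = r.src ∧ l.tgt = r.tgt ∧
      l.verts ∩ r.verts = {l.src, l.tgt} ∧ Disjoint l.edges r.edges

end SPTree

/-- `G` is the series-parallel graph given by the (well-formed, spanning) sp-tree `T`. -/
def RepresentsSP {V : Type*} (G : SimpleGraph V) (T : SPTree V) : Prop :=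
  T.WF ∧ T.verts = Set.univ ∧ G = SimpleGraph.fromEdgeSet T.edges

def IsSPGraph {V : Type*} (G : SimpleGraph V) : Prop := ∃ T : SPTree V, RepresentsSP G T

/-!
Removing `{s₁, t₁}` turns the four middle vertices into isolated components, so if
`τ(G) = 1/2` there is nothing else outside `{s₁, t₁}` (a fifth component would give
`τ(G) ≤ 2/5`) and `G` has exactly six vertices. Delete the edge `v₀s₁`. In the resulting
graph the only cutset of size at most one is `{t₁}`, which leaves two components, and a cutset
of size `k ≥ 2` leaves at most `6 - k ≤ 2k` components. So the toughness stays at least `1/2`.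
-/

section Components

variable {V : Type*} {G : SimpleGraph V} {S : Set V}

lemma numComp_le_of_forall_reachable {ι : Type*} [Finite ι] (f : ι → ↥Sᶜ)
    (h : ∀ y, ∃ i, (G.induce Sᶜ).Reachable y (f i)) : numComp G S ≤ Nat.card ι :=
  Nat.card_le_card_of_surjective (fun i => (G.induce Sᶜ).connectedComponentMk (f i)) fun c =>
    c.ind fun y => (h y).imp fun _ hi => ConnectedComponent.sound hi.symm

lemma numComp_le_ncard_compl [Finite V] : numComp G S ≤ Sᶜ.ncard :=
  (Nat.card_le_card_of_surjective _ fun c => c.exists_rep).trans (Nat.card_coe_set_eq _).le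

lemma eq_of_reachable_of_neighborSet_subset {x y : ↥Sᶜ} (hx : G.neighborSet x ⊆ S)
    (h : (G.induce Sᶜ).Reachable x y) : x = y := by
  obtain ⟨w⟩ := h
  cases w with
  | nil => rfl
  | @cons _ z _ hadj _ => exact absurd (hx (induce_adj.mp hadj)) z.2

lemma card_add_one_le_numComp [Finite V] {ι : Type*} {v : ι → V} (hinj : v.Injective)
    (hvS : ∀ i, v i ∉ S) (hN : ∀ i, G.neighborSet (v i) ⊆ S) {w : V} (hwS : w ∉ S)
    (hw : ∀ i, w ≠ v i) : Nat.card ι + 1 ≤ numComp G S := by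
  have : Finite ι := Finite.of_injective v hinj
  let f : Option ι → ↥Sᶜ := fun o => o.elim ⟨w, hwS⟩ fun i => ⟨v i, hvS i⟩
  have hsome (i : ι) (o : Option ι) (h : (G.induce Sᶜ).Reachable (f (some i)) (f o)) :
      some i = o := by
    have hvo := congrArg Subtype.val (eq_of_reachable_of_neighborSet_subset (hN i) h)
    cases o with
    | none => exact absurd hvo.symm (hw i)
    | some j => exact congrArg some (hinj hvo)
  have hf : Function.Injective fun o => (G.induce Sᶜ).connectedComponentMk (f o) := by
    intro a b hab
    have hr := ConnectedComponent.exact hab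
    cases a with
    | some i => exact hsome i b hr
    | none =>
      cases b with
      | none => rfl
      | some j => exact (hsome j none hr.symm).symm
  simpa [numComp] using Nat.card_le_card_of_injective _ hf

end Components

section Toughness

variable {V : Type*} {G : SimpleGraph V}

lemma toughness_le_of_isCutset {S : Set V} (hS : IsCutset G S) :
    toughness G ≤ S.ncard / numComp G S :=
  csInf_le ⟨0, by rintro _ ⟨T, -, rfl⟩; positivity⟩ ⟨S, hS, rfl⟩

lemma le_toughness {t : ℝ} (hne : ∃ S, IsCutset G S)
    (h : ∀ S, IsCutset G S → t * numComp G S ≤ S.ncard) : t ≤ toughness G := by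
  obtain ⟨S₀, hS₀⟩ := hne
  refine le_csInf ⟨_, S₀, hS₀, rfl⟩ ?_
  rintro _ ⟨S, hS, rfl⟩
  have hpos : (0 : ℝ) < numComp G S := by
    have : 0 < numComp G S := zero_lt_one.trans hS
    exact_mod_cast this
  rw [le_div_iff₀ hpos]
  exact h S hS

end Toughness

section R4

variable {V : Type*} {G : SimpleGraph V} {s t : V} {v : Fin 4 → V}

lemma eq_or_eq_or_mem_range_of_half_le_toughness [Finite V] (hst : s ≠ t)
    (hinj : v.Injective) (hvS : ∀ i, v i ∉ ({s, t} : Set V))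
    (hN : ∀ i, G.neighborSet (v i) ⊆ {s, t})
    (hτ : 1 / 2 ≤ toughness G) (w : V) : w = s ∨ w = t ∨ w ∈ Set.range v := by
  by_contra! hw
  obtain ⟨hws, hwt, hwv⟩ := hw
  have h5 : 5 ≤ numComp G {s, t} := by
    simpa using card_add_one_le_numComp hinj hvS hN (w := w) (by simp [hws, hwt])
      fun i h => hwv ⟨i, h.symm⟩
  have hle := toughness_le_of_isCutset (show IsCutset G {s, t} by unfold IsCutset; omega)
  have h5' : (5 : ℝ) ≤ numComp G {s, t} := by exact_mod_cast h5
  rw [Set.ncard_pair hst, le_div_iff₀ (by linarith)] at hle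
  push_cast at hle
  nlinarith

lemma card_le_six_of_cover [Finite V] (hinj : v.Injective)
    (hcover : ∀ w, w = s ∨ w = t ∨ w ∈ Set.range v) : Nat.card V ≤ 6 := by
  have huniv : Set.univ = insert s (insert t (Set.range v)) := by
    ext w; simpa using hcover w
  calc Nat.card V = (insert s (insert t (Set.range v))).ncard := by rw [← huniv, Set.ncard_univ]
    _ ≤ (Set.range v).ncard + 1 + 1 :=
      (Set.ncard_insert_le _ _).trans (Nat.add_le_add_right (Set.ncard_insert_le _ _) 1)
    _ = 6 := by rw [Set.ncard_range_of_injective hinj, Nat.card_fin]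

lemma numComp_le_one_of_not_mem (hcover : ∀ w, w = s ∨ w = t ∨ w ∈ Set.range v)
    (ht : ∀ i, G.Adj (v i) t) (hs : ∀ i ≠ 0, G.Adj (v i) s) {S : Set V} (htS : t ∉ S)
    {j : Fin 4} (hj : j ≠ 0) (hjS : v j ∉ S) : numComp G S ≤ 1 := by
  refine (numComp_le_of_forall_reachable (ι := Unit) (fun _ => ⟨t, htS⟩) ?_).trans_eq
    Nat.card_unique
  rintro ⟨y, hyS⟩
  refine ⟨(), ?_⟩
  rcases hcover y with rfl | rfl | ⟨i, rfl⟩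
  · exact (induce_adj.mpr (hs j hj).symm).reachable.trans
      (induce_adj.mpr (ht j) : (G.induce Sᶜ).Adj ⟨v j, hjS⟩ _).reachable
  · rfl
  · exact (induce_adj.mpr (ht i)).reachable

lemma numComp_singleton_le_two (hcover : ∀ w, w = s ∨ w = t ∨ w ∈ Set.range v)
    (ht : ∀ i, G.Adj (v i) t) (hs : ∀ i ≠ 0, G.Adj (v i) s) (hst : s ≠ t) :
    numComp G {t} ≤ 2 := by
  have hv0 : v 0 ∈ ({t} : Set V)ᶜ := (ht 0).ne
  refine (numComp_le_of_forall_reachable ![⟨s, hst⟩, ⟨v 0, hv0⟩] ?_).trans_eq (by simp)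
  rintro ⟨y, hyt⟩
  rcases hcover y with rfl | rfl | ⟨i, rfl⟩
  · exact ⟨0, .refl _⟩
  · exact absurd rfl hyt
  · by_cases hi : i = 0
    · subst hi; exact ⟨1, .refl _⟩
    · exact ⟨0, (induce_adj.mpr (hs i hi)).reachable⟩

lemma numComp_le_two_mul_ncard [Finite V] (hinj : v.Injective)
    (hcover : ∀ w, w = s ∨ w = t ∨ w ∈ Set.range v)
    (ht : ∀ i, G.Adj (v i) t) (hs : ∀ i ≠ 0, G.Adj (v i) s) (hst : s ≠ t)
    {S : Set V} (hS : IsCutset G S) : numComp G S ≤ 2 * S.ncard := by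
  rcases le_or_gt 2 S.ncard with h2 | h1
  · have := card_le_six_of_cover hinj hcover
    have := numComp_le_ncard_compl (G := G) (S := S)
    have := Set.ncard_add_ncard_compl S
    omega
  have hS1 : ∀ a ∈ S, ∀ b ∈ S, a = b := (Set.ncard_le_one S.toFinite).mp (by omega)
  by_cases htS : t ∈ S
  · obtain rfl : S = {t} :=
      Set.eq_singleton_iff_unique_mem.mpr ⟨htS, fun x hx => hS1 x hx t htS⟩
    simpa using numComp_singleton_le_two hcover ht hs hst
  · have hv : v 1 ∉ S ∨ v 2 ∉ S := by
      by_contra! h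
      exact absurd (hinj (hS1 _ h.1 _ h.2)) (by decide)
    refine absurd hS (not_lt.mpr ?_)
    rcases hv with hv | hv <;> exact numComp_le_one_of_not_mem hcover ht hs htS (by decide) hv

lemma half_le_toughness_of_cover [Finite V] (hinj : v.Injective)
    (hcover : ∀ w, w = s ∨ w = t ∨ w ∈ Set.range v)
    (ht : ∀ i, G.Adj (v i) t) (hs : ∀ i ≠ 0, G.Adj (v i) s) (hst : s ≠ t)
    (hv0 : G.neighborSet (v 0) ⊆ {t}) (hv0s : v 0 ≠ s) : 1 / 2 ≤ toughness G := by
  have hcut : IsCutset G {t} := show 2 ≤ numComp G {t} by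
    simpa using card_add_one_le_numComp (ι := Unit) (v := fun _ => v 0)
      (Function.injective_of_subsingleton _) (fun _ => (ht 0).ne) (fun _ => hv0) hst
      fun _ => hv0s.symm
  refine le_toughness ⟨_, hcut⟩ fun S hS => ?_
  have : (numComp G S : ℝ) ≤ 2 * S.ncard := by
    exact_mod_cast numComp_le_two_mul_ncard hinj hcover ht hs hst hS
  linarith

end R4

theorem not_minTough_of_R4_general {V : Type*} [Fintype V]
    (G : SimpleGraph V)
    (s₁ t₁ : V) (hst : s₁ ≠ t₁)
    (v : Fin 4 → V) (hinj : Function.Injective v)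
    (hmid : ∀ i : Fin 4, G.neighborSet (v i) = {s₁, t₁}) :
    ¬ MinTough G (1 / 2) := by
  rintro ⟨hτ, hmin⟩
  have hadj (i : Fin 4) (y : V) : G.Adj (v i) y ↔ y = s₁ ∨ y = t₁ := by
    rw [← mem_neighborSet, hmid i]; rfl
  have hvs (i : Fin 4) : v i ≠ s₁ := fun h => G.irrefl ((hadj i _).mpr (.inl h))
  have hvt (i : Fin 4) : v i ≠ t₁ := fun h => G.irrefl ((hadj i _).mpr (.inr h))
  have hvS (i : Fin 4) : v i ∉ ({s₁, t₁} : Set V) := by simp [hvs i, hvt i]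
  have hcover :=
    eq_or_eq_or_mem_range_of_half_le_toughness hst hinj hvS (fun i => (hmid i).le) hτ.ge
  refine (hmin s(v 0, s₁) ((hadj 0 s₁).mpr (.inl rfl))).not_ge
    (half_le_toughness_of_cover hinj hcover (fun i => ?_) (fun i hi => ?_) hst
      (fun y hy => ?_) (hvs 0))
  · simp [hadj, hvs i, hst.symm]
  · simp [hadj, hinj.eq_iff, hi, hvs i]
  · simp [hadj] at hy
    tauto

/-- If a series-parallel graph `G` contains `R₄` as a substructure, i.e. four distinct middle
vertices each of degree 2 with neighborhood exactly `{s₁, t₁}`, then `G` is not minimally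
1/2-tough. -/
theorem not_minTough_of_R4 {V : Type*} [Fintype V]
    (G : SimpleGraph V) (hsp : IsSPGraph G)
    (s₁ t₁ : V) (hst : s₁ ≠ t₁)
    (v : Fin 4 → V) (hinj : Function.Injective v)
    (hmid : ∀ i : Fin 4, G.neighborSet (v i) = {s₁, t₁}) :
    ¬ MinTough G (1 / 2) :=
  not_minTough_of_R4_general G s₁ t₁ hst v hinj hmid
end
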